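/- arXiv:1708.04929 — 2 statements merged into one kernel-verified Lean document; each statement's English description precedes it below -/
import Mathlib

section
/- Determinant lower bound via spectral data (Ipsen–Lee type bound): let S be symmetric positive definite, M a clique partition, and S^M the corresponding block-diagonal restriction (which is positive definite). Let ρ be the spectral radius and λ the smallest eigenvalue of (S^M)^{−1}(S − S^M). Then e^{−pρ²/(1+λ)} det(S^M) ≤ det(S) ≤ det(S^M), where p is the dimension. -/
/-!
Write `B = S^M`, so that `S = B (1 + E)`. `E = B⁻¹ (S - B)` has the characteristic polynomial of the
symmetric matrix `B^{-1/2} (S - B) B^{-1/2}`, hence real eigenvalues `eᵢ`, and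
`det S = det B · ∏ (1 + eᵢ)`. Since `B⁻¹` is block diagonal while `S - B` vanishes on the blocks,
`∑ eᵢ = tr E = 0`. Then `1 + x ≤ eˣ` gives `∏ (1 + eᵢ) ≤ 1`, and
`log (1 + x) ≥ x / (1 + x) ≥ x - x² / (1 + λ)` for `x ≥ λ` gives
`∏ (1 + eᵢ) ≥ exp (-∑ eᵢ² / (1 + λ)) ≥ exp (-p ρ² / (1 + λ))`.
-/

open Matrix Polynomial

def cliqueRestrict {p : ℕ} (S : Matrix (Fin p) (Fin p) ℝ) (c : Fin p → ℕ) :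
    Matrix (Fin p) (Fin p) ℝ :=
  Matrix.of fun i j => if c i = c j then S i j else 0

namespace Real

theorem exp_sub_sq_div_le_one_add {lam x : ℝ} (hlam : 0 < 1 + lam) (hx : lam ≤ x) :
    exp (x - x ^ 2 / (1 + lam)) ≤ 1 + x := by
  have hx1 : 0 < 1 + x := by linarith
  calc exp (x - x ^ 2 / (1 + lam)) ≤ exp (1 - (1 + x)⁻¹) := exp_le_exp.mpr <|
        calc x - x ^ 2 / (1 + lam) ≤ x - x ^ 2 / (1 + x) := by gcongr
          _ = 1 - (1 + x)⁻¹ := by field_simp; ring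
    _ ≤ exp (log (1 + x)) := exp_le_exp.mpr (one_sub_inv_le_log_of_pos hx1)
    _ = 1 + x := exp_log hx1

variable {ι : Type*} [Fintype ι] {e : ι → ℝ}

theorem prod_one_add_le_one_of_sum_eq_zero (hpos : ∀ i, 0 ≤ 1 + e i) (hsum : ∑ i, e i = 0) :
    ∏ i, (1 + e i) ≤ 1 :=
  calc ∏ i, (1 + e i) ≤ ∏ i, exp (e i) :=
        Finset.prod_le_prod (fun i _ => hpos i) fun i _ => by linarith [add_one_le_exp (e i)]
    _ = 1 := by rw [← exp_sum, hsum, exp_zero]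

theorem exp_neg_card_mul_sq_div_le_prod_one_add {lam ρ : ℝ} (hlam : 0 < 1 + lam)
    (hle : ∀ i, lam ≤ e i) (habs : ∀ i, |e i| ≤ ρ) (hsum : ∑ i, e i = 0) :
    exp (-(Fintype.card ι : ℝ) * ρ ^ 2 / (1 + lam)) ≤ ∏ i, (1 + e i) := by
  have hsq : ∑ i, e i ^ 2 ≤ Fintype.card ι * ρ ^ 2 := by
    simpa using Finset.sum_le_card_nsmul Finset.univ (fun i => e i ^ 2) (ρ ^ 2)
      fun i _ => sq_le_sq' (abs_le.mp (habs i)).1 (abs_le.mp (habs i)).2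
  calc exp (-(Fintype.card ι : ℝ) * ρ ^ 2 / (1 + lam))
      ≤ exp (∑ i, (e i - e i ^ 2 / (1 + lam))) := by
        rw [Finset.sum_sub_distrib, hsum, ← Finset.sum_div, zero_sub, neg_mul, neg_div]
        gcongr
    _ = ∏ i, exp (e i - e i ^ 2 / (1 + lam)) := exp_sum _ _
    _ ≤ ∏ i, (1 + e i) :=
        Finset.prod_le_prod (fun i _ => (exp_pos _).le)
          fun i _ => exp_sub_sq_div_le_one_add hlam (hle i)

end Real

namespace Matrix

variable {n : Type*} [Fintype n] [DecidableEq n]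

section CharpolyEqProd

variable {R : Type*} [CommRing R] {M : Matrix n n R} {e : n → R}

theorem trace_eq_sum_of_charpoly_eq_prod [Nontrivial R] (h : M.charpoly = ∏ i, (X - C (e i))) :
    M.trace = ∑ i, e i := by
  rw [trace_eq_neg_charpoly_nextCoeff, h, prod_X_sub_C_nextCoeff, neg_neg]

theorem det_one_add_of_charpoly_eq_prod (h : M.charpoly = ∏ i, (X - C (e i))) :
    (1 + M).det = ∏ i, (1 + e i) := by
  have hev := M.eval_charpoly (-1)
  have hneg : scalar n (-1 : R) - M = -(1 + M) := by
    rw [map_neg, map_one]; abel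
  rw [h, eval_prod, hneg, det_neg] at hev
  simp only [eval_sub, eval_X, eval_C, ← neg_add', Finset.prod_neg, Finset.card_univ] at hev
  exact ((isUnit_neg_one (α := R)).pow _).mul_left_cancel hev.symm

theorem mem_roots_of_charpoly_eq_prod [IsDomain R] (h : M.charpoly = ∏ i, (X - C (e i)))
    (i : n) : e i ∈ M.charpoly.roots := by
  rw [mem_roots M.charpoly_monic.ne_zero, IsRoot, h, eval_prod]
  exact Finset.prod_eq_zero (Finset.mem_univ i) (by simp)

theorem algebraMap_mem_aroots_of_charpoly_eq_prod [IsDomain R] {S : Type*} [CommRing S]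
    [IsDomain S] [Algebra R S] [FaithfulSMul R S] (h : M.charpoly = ∏ i, (X - C (e i)))
    (i : n) : algebraMap R S (e i) ∈ M.charpoly.aroots S :=
  Multiset.mem_of_le (map_roots_le_of_injective _ (FaithfulSMul.algebraMap_injective R S))
    (Multiset.mem_map_of_mem _ (mem_roots_of_charpoly_eq_prod h i))

end CharpolyEqProd

theorem commute_nonsing_inv_left {R : Type*} [CommRing R] {A P : Matrix n n R}
    (h : Commute A P) : Commute A⁻¹ P := by
  by_cases hA : IsUnit A.det
  · have hu := (isUnit_iff_isUnit_det A).mpr hA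
    simpa [coe_units_inv] using Commute.units_inv_left (u := hu.unit) h
  · simp [nonsing_inv_apply_not_isUnit _ hA]

open scoped ComplexOrder MatrixOrder in
theorem PosDef.exists_charpoly_inv_mul_eq_prod {𝕜 : Type*} [RCLike 𝕜] {B D : Matrix n n 𝕜}
    (hB : B.PosDef) (hD : D.IsHermitian) :
    ∃ e : n → ℝ, (B⁻¹ * D).charpoly = ∏ i, (X - C (e i : 𝕜)) := by
  set T := CFC.sqrt B⁻¹
  have hT : T * T = B⁻¹ := CFC.sqrt_mul_sqrt_self _ hB.inv.posSemidef.nonneg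
  have hTH : T.IsHermitian := (CFC.sqrt_nonneg _).posSemidef.isHermitian
  have hA : (T * D * T).IsHermitian := by
    simpa [hTH.eq] using isHermitian_conjTranspose_mul_mul T hD
  refine ⟨hA.eigenvalues, ?_⟩
  rw [← hA.charpoly_eq, ← hT, mul_assoc, charpoly_mul_comm, mul_assoc]

end Matrix

section cliqueRestrict

variable {p : ℕ} (S : Matrix (Fin p) (Fin p) ℝ) (c : Fin p → ℕ)

theorem cliqueRestrict_commute_diagonal (k : ℕ) :
    Commute (cliqueRestrict S c) (diagonal fun i => if c i = k then 1 else 0) := by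
  ext i j
  simp only [mul_diagonal, diagonal_mul, cliqueRestrict, of_apply]
  split_ifs <;> simp_all

theorem inv_cliqueRestrict_apply_of_ne {i j : Fin p} (hij : c i ≠ c j) :
    (cliqueRestrict S c)⁻¹ i j = 0 := by
  have h := congrFun₂ (commute_nonsing_inv_left (cliqueRestrict_commute_diagonal S c (c j))).eq i j
  simpa [mul_diagonal, diagonal_mul, hij] using h

theorem trace_inv_cliqueRestrict_mul_sub :
    ((cliqueRestrict S c)⁻¹ * (S - cliqueRestrict S c)).trace = 0 := by
  refine Finset.sum_eq_zero fun i _ => ?_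
  rw [diag_apply, mul_apply]
  refine Finset.sum_eq_zero fun j _ => ?_
  by_cases hij : c i = c j
  · simp [cliqueRestrict, hij]
  · simp [inv_cliqueRestrict_apply_of_ne S c hij]

theorem dotProduct_cliqueRestrict_mulVec (x : Fin p → ℝ) :
    x ⬝ᵥ (cliqueRestrict S c *ᵥ x) = ∑ k ∈ Finset.univ.image c,
      (fun i => if c i = k then x i else 0) ⬝ᵥ (S *ᵥ fun i => if c i = k then x i else 0) := by
  simp only [dotProduct, mulVec, cliqueRestrict, of_apply, Finset.mul_sum]
  rw [Finset.sum_comm (s := Finset.univ.image c)]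
  refine Finset.sum_congr rfl fun i _ => ?_
  rw [Finset.sum_comm (s := Finset.univ.image c)]
  refine Finset.sum_congr rfl fun j _ => ?_
  rw [Finset.sum_eq_single_of_mem (c i) (Finset.mem_image_of_mem c (Finset.mem_univ i))]
  · split_ifs <;> simp_all
  · intro k _ hk
    simp [Ne.symm hk]

theorem posDef_cliqueRestrict {S : Matrix (Fin p) (Fin p) ℝ} (hS : S.PosDef) :
    (cliqueRestrict S c).PosDef := by
  refine PosDef.of_dotProduct_mulVec_pos ?_ fun x hx => ?_
  · ext i j
    simp [cliqueRestrict, eq_comm, ← hS.isHermitian.apply i j]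
  · obtain ⟨i, hi⟩ := Function.ne_iff.mp hx
    rw [star_trivial, dotProduct_cliqueRestrict_mulVec]
    refine Finset.sum_pos' (fun k _ => hS.posSemidef.dotProduct_mulVec_nonneg _)
      ⟨c i, Finset.mem_image_of_mem c (Finset.mem_univ i), ?_⟩
    simpa using hS.dotProduct_mulVec_pos (x := fun j => if c j = c i then x j else 0)
      (Function.ne_iff.mpr ⟨i, by simpa using hi⟩)

end cliqueRestrict

theorem det_spectral_sandwich_general {p : ℕ} (S : Matrix (Fin p) (Fin p) ℝ)
    (hSpd : S.PosDef) (c : Fin p → ℕ)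
    (E : Matrix (Fin p) (Fin p) ℝ)
    (hE : E = (cliqueRestrict S c)⁻¹ * (S - cliqueRestrict S c))
    (ρ lam : ℝ)
    (hρub : ∀ μ ∈ E.charpoly.aroots ℂ, ‖μ‖ ≤ ρ)
    (hlamlb : ∀ μ ∈ E.charpoly.roots, lam ≤ μ)
    (hlam : 0 < 1 + lam) :
    Real.exp (-(p : ℝ) * ρ ^ 2 / (1 + lam)) * (cliqueRestrict S c).det ≤ S.det ∧
      S.det ≤ (cliqueRestrict S c).det := by
  set B := cliqueRestrict S c
  have hB : B.PosDef := posDef_cliqueRestrict c hSpd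
  obtain ⟨e, he⟩ := hB.exists_charpoly_inv_mul_eq_prod (hSpd.isHermitian.sub hB.isHermitian)
  simp only [← hE, RCLike.ofReal_real_eq_id, id] at he
  have hsum : ∑ i, e i = 0 := by
    rw [← trace_eq_sum_of_charpoly_eq_prod he, hE, trace_inv_cliqueRestrict_mul_sub]
  have hdet : S.det = B.det * ∏ i, (1 + e i) := by
    rw [← det_one_add_of_charpoly_eq_prod he, ← det_mul, hE, mul_add, mul_one,
      mul_nonsing_inv_cancel_left _ _ hB.det_pos.ne'.isUnit, add_sub_cancel]
  have hle (i : Fin p) : lam ≤ e i := hlamlb _ (mem_roots_of_charpoly_eq_prod he i)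
  have habs (i : Fin p) : |e i| ≤ ρ := by
    simpa using hρub _ (algebraMap_mem_aroots_of_charpoly_eq_prod (S := ℂ) he i)
  rw [hdet]
  constructor
  · rw [mul_comm]
    refine mul_le_mul_of_nonneg_left ?_ hB.det_pos.le
    simpa using Real.exp_neg_card_mul_sq_div_le_prod_one_add hlam hle habs hsum
  · exact mul_le_of_le_one_right hB.det_pos.le
      (Real.prod_one_add_le_one_of_sum_eq_zero (fun i => by linarith [hle i]) hsum)

/-- Ipsen–Lee type determinant bound: with `ρ` the spectral radius and `lam` the smallest
eigenvalue of `E = (S^M)⁻¹ (S - S^M)`,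
`e^{-pρ²/(1+lam)} det(S^M) ≤ det S ≤ det(S^M)`. -/
theorem det_spectral_sandwich {p : ℕ} (S : Matrix (Fin p) (Fin p) ℝ)
    (hS : S.IsSymm) (hSpd : S.PosDef) (c : Fin p → ℕ)
    (E : Matrix (Fin p) (Fin p) ℝ)
    (hE : E = (cliqueRestrict S c)⁻¹ * (S - cliqueRestrict S c))
    (ρ lam : ℝ)
    (hρub : ∀ μ ∈ E.charpoly.aroots ℂ, ‖μ‖ ≤ ρ)
    (hρmem : ∃ μ ∈ E.charpoly.aroots ℂ, ‖μ‖ = ρ)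
    (hlammem : lam ∈ E.charpoly.roots)
    (hlamlb : ∀ μ ∈ E.charpoly.roots, lam ≤ μ)
    (hlam : 0 < 1 + lam) :
    Real.exp (-(p : ℝ) * ρ ^ 2 / (1 + lam)) * (cliqueRestrict S c).det ≤ S.det ∧
      S.det ≤ (cliqueRestrict S c).det :=
  det_spectral_sandwich_general S hSpd c E hE ρ lam hρub hlamlb hlam
end

section
/- Change of variables Jacobian: the map A ↦ Z = A^{−1}B on invertible p×p matrices, for a fixed invertible matrix B, has Lebesgue-measure Jacobian |det Z|^{−2p}|det B|^{p}; i.e. for any nonnegative measurable f, ∫ f(A^{−1}B) dA = ∫ f(Z) |det Z|^{−2p} |det B|^{p} dZ. -/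
/-!
Away from the null set of singular matrices, `Z ↦ B Z⁻¹` is a bijection of the invertible
matrices onto themselves whose inverse is `A ↦ A⁻¹ B`. Its derivative at `Z` is
`H ↦ -(B Z⁻¹) H Z⁻¹`, a left multiplication composed with a right multiplication, whose
determinant is `det(-(B Z⁻¹))^p det(Z⁻¹)^p` (the matrix of `H ↦ C H D` is `C ⊗ Dᵀ`).
Its absolute value is `|det Z|^(-2p) |det B|^p`, and the change of variables formula gives
the claim. Singular matrices form a null set because every line `x + t • 1` meets them in
the finitely many roots of the characteristic polynomial of `-x`.
-/

open MeasureTheory Matrix Set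
open scoped ENNReal

attribute [local instance] Matrix.linftyOpNormedRing Matrix.linftyOpNormedAlgebra

/-- Integrating the indicator of `{(t, x) | x + c t ∈ S}` in `x` first gives `μ S` for every `t`,
hence `μ S * ∞` in total, while integrating in `t` first gives `0`. -/
theorem measure_eq_zero_of_countable_slices {E : Type*} [MeasurableSpace E] [AddGroup E]
    [MeasurableAdd₂ E] {μ : Measure E} [SFinite μ] [μ.IsAddRightInvariant] {c : ℝ → E}
    (hc : Measurable c) {S : Set E} (hS : MeasurableSet S)
    (hslice : ∀ x, {t | x + c t ∈ S}.Countable) : μ S = 0 := by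
  set T : Set (ℝ × E) := {q | q.2 + c q.1 ∈ S}
  have hT : MeasurableSet T := (measurable_snd.add (hc.comp measurable_fst)) hS
  have htop : volume.prod μ T = μ S * ∞ := by
    have hsection (t : ℝ) : μ (Prod.mk t ⁻¹' T) = μ S := measure_preimage_add_right μ (c t) S
    simp [Measure.prod_apply hT, hsection]
  have hzero : volume.prod μ T = 0 := by
    simp [Measure.prod_apply_symm hT, T, preimage, (hslice _).measure_zero]
  simpa using htop.symm.trans hzero

theorem lintegral_eq_lintegral_abs_det_fderiv_mul_of_bijOn {E : Type*} [NormedAddCommGroup E]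
    [NormedSpace ℝ E] [FiniteDimensional ℝ E] [MeasurableSpace E] [BorelSpace E]
    (μ : Measure E) [μ.IsAddHaarMeasure] {s : Set E} {g : E → E} {g' : E → E →L[ℝ] E}
    (hs : MeasurableSet s) (hs_ae : ∀ᵐ x ∂μ, x ∈ s) (hg : BijOn g s s)
    (hg' : ∀ x ∈ s, HasFDerivWithinAt g (g' x) s x) (F : E → ℝ≥0∞) :
    ∫⁻ x, F x ∂μ = ∫⁻ x, ENNReal.ofReal |(g' x).det| * F (g x) ∂μ := by
  rw [← Measure.restrict_eq_self_of_ae_mem hs_ae,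
    ← lintegral_image_eq_lintegral_abs_det_fderiv_mul μ hs hg' hg.injOn, hg.image_eq]

theorem ContinuousLinearEquiv.det_symm_comp_comp {𝕜 E F : Type*} [CommRing 𝕜]
    [AddCommGroup E] [Module 𝕜 E] [TopologicalSpace E] [AddCommGroup F] [Module 𝕜 F]
    [TopologicalSpace F] (e : E ≃L[𝕜] F) (L : F →L[𝕜] F) :
    ((e.symm : F →L[𝕜] E).comp (L.comp (e : E →L[𝕜] F))).det = L.det :=
  LinearMap.det_conj (L : F →ₗ[𝕜] F) e.symm.toLinearEquiv

namespace Matrix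

variable {n R : Type*} [Fintype n] [DecidableEq n]

theorem measurableSet_setOf_det_eq_zero : MeasurableSet {x : n → n → ℝ | (of x).det = 0} :=
  (continuous_id (X := n → n → ℝ)).matrix_det.measurable (measurableSet_singleton 0)

theorem finite_setOf_det_add_smul_one_eq_zero [CommRing R] [IsDomain R] (A : Matrix n n R) :
    {t : R | (A + t • 1).det = 0}.Finite := by
  convert Polynomial.finite_setOfPred_isRoot (-A).charpoly_monic.ne_zero using 3 with t
  rw [Polynomial.IsRoot, eval_charpoly, scalar_apply, sub_neg_eq_add, add_comm,
    smul_one_eq_diagonal]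

theorem volume_setOf_det_eq_zero : volume {x : n → n → ℝ | (of x).det = 0} = 0 :=
  measure_eq_zero_of_countable_slices (c := fun t => t • of.symm 1)
    (measurable_id.smul_const _) measurableSet_setOf_det_eq_zero
    fun x => (finite_setOf_det_add_smul_one_eq_zero (of x)).countable

theorem det_mulLeftRight [CommRing R] (C D : Matrix n n R) :
    LinearMap.det (LinearMap.mulLeftRight R (C, D)) =
      C.det ^ Fintype.card n * D.det ^ Fintype.card n := by
  have hkron : LinearMap.mulLeftRight R (C, D) =
      toLin (stdBasis R n n) (stdBasis R n n) (kroneckerMap (· * ·) C Dᵀ) := by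
    refine (stdBasis R n n).ext fun ⟨k, l⟩ => ?_
    rw [toLin_self]
    ext i j
    simp [stdBasis_eq_single, mul_apply, single, Fintype.sum_prod_type, mul_ite,
      Finset.sum_ite_eq, Finset.sum_ite_eq', ite_and, sum_apply, mul_comm, of_apply, smul_eq_mul]
  rw [hkron, LinearMap.det_toLin, det_kronecker, det_transpose]

theorem abs_det_mulLeftRight_neg_mul_inv_inv (B Z : Matrix n n ℝ) (hZ : Z.det ≠ 0) :
    |LinearMap.det (LinearMap.mulLeftRight ℝ (-(B * Z⁻¹), Z⁻¹))| =
      |Z.det| ^ (-(2 * Fintype.card n : ℝ)) * |B.det| ^ Fintype.card n := by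
  have hpos : 0 < |Z.det| := abs_pos.mpr hZ
  rw [det_mulLeftRight, det_neg, det_mul, det_nonsing_inv, Ring.inverse_eq_inv,
    show (-(2 * Fintype.card n : ℝ)) = -((2 * Fintype.card n : ℕ) : ℝ) by push_cast; ring,
    Real.rpow_neg hpos.le, Real.rpow_natCast]
  simp only [abs_mul, abs_pow, abs_neg, abs_one, one_pow, one_mul, abs_inv, mul_pow, inv_pow]
  ring

theorem hasFDerivAt_inv (Z : Matrix n n ℝ) (hZ : IsUnit Z.det) :
    HasFDerivAt (fun X : Matrix n n ℝ => X⁻¹) (-ContinuousLinearMap.mulLeftRight ℝ _ Z⁻¹ Z⁻¹) Z := by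
  have hU : IsUnit Z := (isUnit_iff_isUnit_det Z).mpr hZ
  rw [show (fun X : Matrix n n ℝ => X⁻¹) = Ring.inverse from funext nonsing_inv_eq_ringInverse]
  simpa [coe_units_inv] using hasFDerivAt_ringInverse (𝕜 := ℝ) hU.unit

/-- The derivative is written with `LinearMap.toContinuousLinearMap`, which carries the product
topology of `Matrix n n ℝ` rather than that of the auxiliary operator norm. -/
theorem hasFDerivAt_mul_inv (B Z : Matrix n n ℝ) (hZ : IsUnit Z.det) :
    HasFDerivAt (fun X : Matrix n n ℝ => B * X⁻¹)
      (LinearMap.mulLeftRight ℝ (-(B * Z⁻¹), Z⁻¹)).toContinuousLinearMap Z := by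
  refine ((hasFDerivAt_inv Z hZ).const_mul B).congr_fderiv ?_
  ext H : 1
  change _ = -(B * Z⁻¹) * H * Z⁻¹
  simp [mul_assoc]

theorem invOn_inv_mul_mul_inv [CommRing R] {B : Matrix n n R} (hB : IsUnit B.det) :
    InvOn (fun A => A⁻¹ * B) (fun Z => B * Z⁻¹) {Z | IsUnit Z.det} {Z | IsUnit Z.det} :=
  ⟨fun Z hZ => by simp [mul_inv_rev, nonsing_inv_nonsing_inv Z hZ, mul_assoc, nonsing_inv_mul B hB],
   fun A hA => by simp [mul_inv_rev, nonsing_inv_nonsing_inv A hA, ← mul_assoc, mul_nonsing_inv B hB]⟩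

theorem bijOn_mul_inv [CommRing R] {B : Matrix n n R} (hB : IsUnit B.det) :
    BijOn (fun Z => B * Z⁻¹) {Z | IsUnit Z.det} {Z | IsUnit Z.det} :=
  (invOn_inv_mul_mul_inv hB).bijOn
    (fun Z hZ => by simpa [det_mul] using hB.mul (isUnit_nonsing_inv_det Z hZ))
    (fun A hA => by simpa [det_mul] using (isUnit_nonsing_inv_det A hA).mul hB)

end Matrix

theorem matrix_inverse_change_of_variables_general {p : ℕ}
    (B : Matrix (Fin p) (Fin p) ℝ) (hB : IsUnit B.det)
    (f : Matrix (Fin p) (Fin p) ℝ → ENNReal) :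
    (∫⁻ a : Fin p → Fin p → ℝ, f ((Matrix.of a)⁻¹ * B) ∂volume) =
      ∫⁻ z : Fin p → Fin p → ℝ,
        f (Matrix.of z) *
          ENNReal.ofReal (|(Matrix.of z).det| ^ (-(2 * p : ℝ)) * |B.det| ^ (p : ℕ))
        ∂volume := by
  let e : (Fin p → Fin p → ℝ) ≃L[ℝ] Matrix (Fin p) (Fin p) ℝ :=
    (ofLinearEquiv ℝ).toContinuousLinearEquiv
  let s := {x : Fin p → Fin p → ℝ | IsUnit (of x).det}
  have hs_compl : sᶜ = {x | (of x).det = 0} := by ext; simp [s, isUnit_iff_ne_zero]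
  have hs : MeasurableSet s := .of_compl (hs_compl ▸ measurableSet_setOf_det_eq_zero)
  have hs_ae : ∀ᵐ z ∂volume, z ∈ s := mem_ae_iff.mpr (hs_compl ▸ volume_setOf_det_eq_zero)
  let g' : (Fin p → Fin p → ℝ) → (Fin p → Fin p → ℝ) →L[ℝ] (Fin p → Fin p → ℝ) := fun z =>
    (e.symm : Matrix (Fin p) (Fin p) ℝ →L[ℝ] _).comp
      ((LinearMap.mulLeftRight ℝ (-(B * (e z)⁻¹), (e z)⁻¹)).toContinuousLinearMap.comp
        (e : _ →L[ℝ] Matrix (Fin p) (Fin p) ℝ))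
  have hderiv : ∀ z ∈ s, HasFDerivAt (e.symm ∘ (B * ·⁻¹) ∘ e) (g' z) z := fun z hz =>
    e.symm.hasFDerivAt.comp z ((hasFDerivAt_mul_inv B (e z) hz).comp z e.hasFDerivAt)
  have hjac : ∀ z ∈ s, |(g' z).det| = |(of z).det| ^ (-(2 * p : ℝ)) * |B.det| ^ p := fun z hz =>
    (congrArg abs (e.det_symm_comp_comp _)).trans
      (by simpa [e] using abs_det_mulLeftRight_neg_mul_inv_inv B (of z) hz.ne_zero)
  have hbij : BijOn (e.symm ∘ (B * ·⁻¹) ∘ e) s s := bijOn_mul_inv hB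
  rw [lintegral_eq_lintegral_abs_det_fderiv_mul_of_bijOn volume hs hs_ae hbij
    fun z hz => (hderiv z hz).hasFDerivWithinAt]
  refine lintegral_congr_ae (hs_ae.mono fun z hz => ?_)
  simp only [Function.comp_apply, hjac z hz]
  rw [mul_comm]
  congr 1
  exact congrArg f ((invOn_inv_mul_mul_inv hB).1 hz)

/-- Change of variables: the map `A ↦ A⁻¹ B` has Jacobian `|det Z|^{-2p} |det B|^p`
with respect to Lebesgue measure on `p × p` matrices. -/
theorem matrix_inverse_change_of_variables {p : ℕ}
    (B : Matrix (Fin p) (Fin p) ℝ) (hB : IsUnit B.det)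
    (f : Matrix (Fin p) (Fin p) ℝ → ENNReal)
    (hf : Measurable fun z : Fin p → Fin p → ℝ => f (Matrix.of z)) :
    (∫⁻ a : Fin p → Fin p → ℝ, f ((Matrix.of a)⁻¹ * B) ∂volume) =
      ∫⁻ z : Fin p → Fin p → ℝ,
        f (Matrix.of z) *
          ENNReal.ofReal (|(Matrix.of z).det| ^ (-(2 * p : ℝ)) * |B.det| ^ (p : ℕ))
        ∂volume :=
  matrix_inverse_change_of_variables_general B hB f
end
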